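/- Let p ∈ (0, 1/2), let Θ be uniform on {p, 1−p}, and let Y given Θ be Bernoulli(Θ). Suppose the informed forecaster observes Θ and reports 0 when Θ = p and 1 when Θ = 1−p. If the uninformed forecaster reports any fixed r ∈ (0, 1), her win probability equals p, which is strictly less than 1/4 + p/2, her win probability from reporting a uniform random element of {0,1} independent of (Θ, Y). -/

import Mathlib

open MeasureTheory

noncomputable section

/-- Single-event two-forecaster Simple Max utility with the quadratic score: the forecaster
reporting `a` against an opponent reporting `b`, on outcome `y`, wins (utility 1) if her
report is strictly closer to `y`, ties (utility 1/2) if equidistant, and loses (utility 0)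
otherwise. -/
def u1 (a b y : ℝ) : ℝ :=
  if |a - y| < |b - y| then 1 else if |a - y| = |b - y| then 1 / 2 else 0

lemma int4 {Ω : Type*} [MeasurableSpace Ω] (μ : Measure Ω) [IsProbabilityMeasure μ]
    (p : ℝ) (hp0 : 0 ≤ p) (hp1 : p ≤ 1) (hplt : p < 1 - p)
    (Θ Y : Ω → ℝ) (hΘmeas : Measurable Θ) (hYmeas : Measurable Y)
    (hΘval : ∀ ω, Θ ω = p ∨ Θ ω = 1 - p) (hYval : ∀ ω, Y ω = 0 ∨ Y ω = 1)
    (hA : μ {ω | Θ ω = p ∧ Y ω = 0} = ENNReal.ofReal ((1 / 2) * (1 - p)))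
    (hB : μ {ω | Θ ω = p ∧ Y ω = 1} = ENNReal.ofReal ((1 / 2) * p))
    (hC : μ {ω | Θ ω = 1 - p ∧ Y ω = 0} = ENNReal.ofReal ((1 / 2) * p))
    (hD : μ {ω | Θ ω = 1 - p ∧ Y ω = 1} = ENNReal.ofReal ((1 / 2) * (1 - p)))
    (a vA vB vC vD : ℝ)
    (h00 : u1 a 0 0 = vA) (h01 : u1 a 0 1 = vB)
    (h10 : u1 a 1 0 = vC) (h11 : u1 a 1 1 = vD) :
    (∫ ω, u1 a (if Θ ω = p then 0 else 1) (Y ω) ∂μ)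
      = vA * ((1 - p) / 2) + vB * (p / 2) + vC * (p / 2) + vD * ((1 - p) / 2) := by
  have hpne : p ≠ 1 - p := ne_of_lt hplt
  set A := {ω | Θ ω = p ∧ Y ω = 0} with hAdef
  set B := {ω | Θ ω = p ∧ Y ω = 1} with hBdef
  set C := {ω | Θ ω = 1 - p ∧ Y ω = 0} with hCdef
  set D := {ω | Θ ω = 1 - p ∧ Y ω = 1} with hDdef
  have hAm : MeasurableSet A :=
    (hΘmeas (measurableSet_singleton p)).inter (hYmeas (measurableSet_singleton 0))
  have hBm : MeasurableSet B :=
    (hΘmeas (measurableSet_singleton p)).inter (hYmeas (measurableSet_singleton 1))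
  have hCm : MeasurableSet C :=
    (hΘmeas (measurableSet_singleton (1 - p))).inter (hYmeas (measurableSet_singleton 0))
  have hDm : MeasurableSet D :=
    (hΘmeas (measurableSet_singleton (1 - p))).inter (hYmeas (measurableSet_singleton 1))
  have heq : ∀ ω, u1 a (if Θ ω = p then 0 else 1) (Y ω)
      = A.indicator (fun _ => vA) ω + B.indicator (fun _ => vB) ω
        + C.indicator (fun _ => vC) ω + D.indicator (fun _ => vD) ω := by
    intro ω
    rcases hΘval ω with h1 | h1 <;> rcases hYval ω with h2 | h2 <;>
      simp [hAdef, hBdef, hCdef, hDdef, Set.indicator_apply, Set.mem_setOf_eq, h1, h2,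
        hpne, hpne.symm, h00, h01, h10, h11]
  rw [integral_congr_ae (Filter.Eventually.of_forall heq)]
  have iA : Integrable (A.indicator (fun _ => vA)) μ := (integrable_const vA).indicator hAm
  have iB : Integrable (B.indicator (fun _ => vB)) μ := (integrable_const vB).indicator hBm
  have iC : Integrable (C.indicator (fun _ => vC)) μ := (integrable_const vC).indicator hCm
  have iD : Integrable (D.indicator (fun _ => vD)) μ := (integrable_const vD).indicator hDm
  have iAB : Integrable (fun ω => A.indicator (fun _ => vA) ω + B.indicator (fun _ => vB) ω) μ :=
    iA.add iB
  have iABC : Integrable (fun ω => A.indicator (fun _ => vA) ω + B.indicator (fun _ => vB) ω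
      + C.indicator (fun _ => vC) ω) μ := iAB.add iC
  rw [integral_add iABC iD, integral_add iAB iC, integral_add iA iB,
    integral_indicator_const _ hAm, integral_indicator_const _ hBm,
    integral_indicator_const _ hCm, integral_indicator_const _ hDm,
    measureReal_def, measureReal_def, measureReal_def, measureReal_def, hA, hB, hC, hD]
  rw [ENNReal.toReal_ofReal (by linarith : (0:ℝ) ≤ 1 / 2 * (1 - p)),
    ENNReal.toReal_ofReal (by linarith : (0:ℝ) ≤ 1 / 2 * p)]
  simp only [smul_eq_mul]
  ring

/-- **Deviations of the uninformed forecaster are suboptimal.** Let `Θ` be uniform on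
`{p, 1−p}` for `0 < p < 1/2`, and let `Y` given `Θ` be Bernoulli(Θ) (the four hypotheses on
`μ` specify exactly this joint distribution).  The informed forecaster observes `Θ` and
reports `0` when `Θ = p` and `1` when `Θ = 1−p`.  If the uninformed forecaster reports any
fixed `r ∈ (0, 1)`, her win probability equals `p`, which is strictly less than
`1/4 + p/2`, her win probability from reporting a uniform random element of `{0,1}`
independent of `(Θ, Y)`. -/
theorem uninformed_deviation_suboptimal {Ω : Type*} [MeasurableSpace Ω]
    (μ : Measure Ω) [IsProbabilityMeasure μ]
    (p : ℝ) (hp0 : 0 < p) (hp : p < 1 / 2)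
    (Θ Y : Ω → ℝ) (hΘmeas : Measurable Θ) (hYmeas : Measurable Y)
    (hΘval : ∀ ω, Θ ω = p ∨ Θ ω = 1 - p) (hYval : ∀ ω, Y ω = 0 ∨ Y ω = 1)
    (hA : μ {ω | Θ ω = p ∧ Y ω = 0} = ENNReal.ofReal ((1 / 2) * (1 - p)))
    (hB : μ {ω | Θ ω = p ∧ Y ω = 1} = ENNReal.ofReal ((1 / 2) * p))
    (hC : μ {ω | Θ ω = 1 - p ∧ Y ω = 0} = ENNReal.ofReal ((1 / 2) * p))
    (hD : μ {ω | Θ ω = 1 - p ∧ Y ω = 1} = ENNReal.ofReal ((1 / 2) * (1 - p)))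
    (r : ℝ) (hr : r ∈ Set.Ioo (0 : ℝ) 1) :
    (∫ ω, u1 r (if Θ ω = p then 0 else 1) (Y ω) ∂μ) = p ∧
    (1 / 2) * (∫ ω, u1 0 (if Θ ω = p then 0 else 1) (Y ω) ∂μ) +
        (1 / 2) * (∫ ω, u1 1 (if Θ ω = p then 0 else 1) (Y ω) ∂μ) = 1 / 4 + p / 2 ∧
    p < 1 / 4 + p / 2 := by
  obtain ⟨hr0, hr1⟩ := hr
  have hp0' : (0:ℝ) ≤ p := le_of_lt hp0
  have hp1 : p ≤ 1 := by linarith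
  have hplt : p < 1 - p := by linarith
  have hr00 : u1 r 0 0 = 0 := by
    rw [u1]
    rw [if_neg, if_neg] <;> rw [sub_zero, sub_zero, abs_of_pos hr0] <;> simp <;> linarith
  have hr01 : u1 r 0 1 = 1 := by
    rw [u1, if_pos]
    rw [abs_of_nonpos (by linarith), abs_of_nonpos (by norm_num)]
    linarith
  have hr10 : u1 r 1 0 = 1 := by
    rw [u1, if_pos]
    rw [sub_zero, sub_zero, abs_of_pos hr0, abs_of_pos one_pos]
    exact hr1
  have hr11 : u1 r 1 1 = 0 := by
    rw [u1]
    rw [if_neg, if_neg] <;> rw [sub_self, abs_zero, abs_of_nonpos (by linarith)] <;> simp <;>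
      linarith
  have h000 : u1 0 0 0 = 1 / 2 := by norm_num [u1]
  have h001 : u1 0 0 1 = 1 / 2 := by norm_num [u1]
  have h010 : u1 0 1 0 = 1 := by norm_num [u1]
  have h011 : u1 0 1 1 = 0 := by norm_num [u1]
  have h100 : u1 1 0 0 = 0 := by norm_num [u1]
  have h101 : u1 1 0 1 = 1 := by norm_num [u1]
  have h110 : u1 1 1 0 = 1 / 2 := by norm_num [u1]
  have h111 : u1 1 1 1 = 1 / 2 := by norm_num [u1]
  have I1 := int4 μ p hp0' hp1 hplt Θ Y hΘmeas hYmeas hΘval hYval hA hB hC hD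
    r 0 1 1 0 hr00 hr01 hr10 hr11
  have I2 := int4 μ p hp0' hp1 hplt Θ Y hΘmeas hYmeas hΘval hYval hA hB hC hD
    0 (1/2) (1/2) 1 0 h000 h001 h010 h011
  have I3 := int4 μ p hp0' hp1 hplt Θ Y hΘmeas hYmeas hΘval hYval hA hB hC hD
    1 0 1 (1/2) (1/2) h100 h101 h110 h111
  refine ⟨by rw [I1]; ring, by rw [I2, I3]; ring, by linarith⟩

end
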